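/- Let θ ∈ ℝ^d be an s-sparse vector and θ̃ ∈ ℝ^d arbitrary. Let θ̂ = P_{2s}(θ̃) be the vector obtained by keeping the 2s largest-magnitude entries of θ̃ and zeroing the rest. Define Δ̃ = θ̃ − θ and Δ̂ = θ̂ − θ, and let ‖P_s(Δ̃)‖₂ denote the maximum over all subsets S ⊆ [d] with |S| ≤ s of the ℓ₂ norm of the restriction of Δ̃ to S. Then (1/5)‖Δ̂‖₂ ≤ ‖P_s(Δ̃)‖₂ ≤ 4‖Δ̂‖₂. -/
import Mathlib


open Finset

/-- The ℓ₂ norm of the restriction of `v` to the coordinate set `S`. -/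
noncomputable def restrictNorm {d : ℕ} (v : Fin d → ℝ) (S : Finset (Fin d)) : ℝ :=
  Real.sqrt (∑ i ∈ S, (v i) ^ 2)

/-- `‖P_s(v)‖₂`: the maximum over subsets `S` with `|S| ≤ s` of the ℓ₂ norm of the
restriction of `v` to `S`. -/
noncomputable def sparseNorm {d : ℕ} (s : ℕ) (v : Fin d → ℝ) : ℝ :=
  (Finset.univ.filter (fun S : Finset (Fin d) => S.card ≤ s)).sup'
    ⟨∅, by simp⟩ (restrictNorm v)

/-- The full ℓ₂ norm of a vector. -/
noncomputable def l2Norm {d : ℕ} (v : Fin d → ℝ) : ℝ :=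
  Real.sqrt (∑ i, (v i) ^ 2)

lemma restrict_le_sparseNorm {d : ℕ} (s : ℕ) (v : Fin d → ℝ) (A : Finset (Fin d))
    (hA : A.card ≤ s) : restrictNorm v A ≤ sparseNorm s v := by
  unfold sparseNorm
  exact Finset.le_sup' (restrictNorm v) (Finset.mem_filter.mpr ⟨Finset.mem_univ _, hA⟩)

lemma sparseNorm_nonneg {d : ℕ} (s : ℕ) (v : Fin d → ℝ) : 0 ≤ sparseNorm s v :=
  le_trans (Real.sqrt_nonneg _) (restrict_le_sparseNorm s v ∅ (by simp))

lemma sq_restrict_le {d : ℕ} (s : ℕ) (v : Fin d → ℝ) (A : Finset (Fin d)) (hA : A.card ≤ s) :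
    ∑ i ∈ A, v i ^ 2 ≤ (sparseNorm s v) ^ 2 := by
  have h1 : restrictNorm v A ≤ sparseNorm s v := restrict_le_sparseNorm s v A hA
  calc ∑ i ∈ A, v i ^ 2 = (restrictNorm v A) ^ 2 := (Real.sq_sqrt (by positivity)).symm
    _ ≤ _ := pow_le_pow_left₀ (Real.sqrt_nonneg _) h1 2

set_option maxHeartbeats 1000000 in
theorem hard_thresholding {d s : ℕ} (θ θtil : Fin d → ℝ)
    (hsparse : (Finset.univ.filter (fun i => θ i ≠ 0)).card ≤ s)
    (S : Finset (Fin d)) (hScard : S.card = 2 * s)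
    (hStop : ∀ i ∈ S, ∀ j ∉ S, |θtil j| ≤ |θtil i|)
    (θhat : Fin d → ℝ) (hθhat : θhat = fun i => if i ∈ S then θtil i else 0) :
    (1 / 5) * l2Norm (θhat - θ) ≤ sparseNorm s (θtil - θ) ∧
      sparseNorm s (θtil - θ) ≤ 4 * l2Norm (θhat - θ) := by
  set T : Finset (Fin d) := Finset.univ.filter (fun i => θ i ≠ 0) with hT
  set Δt : Fin d → ℝ := θtil - θ with hΔt
  set Δh : Fin d → ℝ := θhat - θ with hΔh
  set N : ℝ := sparseNorm s Δt with hNdef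
  set L : ℝ := l2Norm Δh with hLdef
  have hN0 : 0 ≤ N := sparseNorm_nonneg s Δt
  have hL0 : 0 ≤ L := Real.sqrt_nonneg _
  have hθ0 : ∀ i, i ∉ T → θ i = 0 := by
    intro i hi
    by_contra h
    exact hi (Finset.mem_filter.mpr ⟨Finset.mem_univ _, h⟩)
  have hΔhS : ∀ i ∈ S, Δh i = Δt i := by
    intro i hi; simp [hΔh, hΔt, hθhat, hi]
  have hΔhSc : ∀ i, i ∉ S → Δh i = -θ i := by
    intro i hi; simp [hΔh, hθhat, hi]
  have hL2 : ∑ i, Δh i ^ 2 = L ^ 2 := (Real.sq_sqrt (by positivity)).symm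
  have hsumL : ∀ A : Finset (Fin d), ∑ i ∈ A, Δh i ^ 2 ≤ L ^ 2 := by
    intro A
    rw [← hL2]
    exact Finset.sum_le_sum_of_subset_of_nonneg (Finset.subset_univ A)
      (fun i _ _ => sq_nonneg _)
  -- B' : subset of S \ T of cardinality s
  have hcardST : s ≤ (S \ T).card := by
    have h1 : (S \ T).card + (S ∩ T).card = S.card := Finset.card_sdiff_add_card_inter S T
    have h2 : (S ∩ T).card ≤ T.card := Finset.card_le_card (Finset.inter_subset_right)
    omega
  obtain ⟨B', hB'sub, hB'card⟩ := Finset.exists_subset_card_eq hcardST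
  have hB'S : B' ⊆ S := hB'sub.trans (Finset.sdiff_subset)
  have hB'θ : ∀ i ∈ B', θ i = 0 := fun i hi =>
    hθ0 i (Finset.mem_sdiff.mp (hB'sub hi)).2
  -- key comparison: small sets off S are dominated by B'
  have hkey : ∀ C : Finset (Fin d), (∀ j ∈ C, j ∉ S) → C.card ≤ s →
      ∑ j ∈ C, θtil j ^ 2 ≤ ∑ i ∈ B', θtil i ^ 2 := by
    intro C hCS hCcard
    rcases C.eq_empty_or_nonempty with rfl | hne
    · simpa using Finset.sum_nonneg (fun i (_ : i ∈ B') => sq_nonneg (θtil i))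
    have hB'ne : B'.Nonempty := by
      rw [← Finset.card_pos, hB'card]
      have := Finset.card_pos.mpr hne
      omega
    set m : ℝ := B'.inf' hB'ne (fun i => θtil i ^ 2) with hm
    have hm0 : 0 ≤ m := Finset.le_inf' hB'ne _ (fun i _ => sq_nonneg _)
    have h1 : ∑ j ∈ C, θtil j ^ 2 ≤ C.card • m := by
      apply Finset.sum_le_card_nsmul
      intro j hj
      apply Finset.le_inf' hB'ne
      intro i hi
      have := hStop i (hB'S hi) j (hCS j hj)
      calc θtil j ^ 2 = |θtil j| ^ 2 := (sq_abs _).symm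
        _ ≤ |θtil i| ^ 2 := pow_le_pow_left₀ (abs_nonneg _) this 2
        _ = θtil i ^ 2 := sq_abs _
    have h2 : (C.card : ℝ) • m ≤ (B'.card : ℝ) • m := by
      apply smul_le_smul_of_nonneg_right _ hm0
      exact_mod_cast hCcard.trans_eq hB'card.symm
    have h3 : B'.card • m ≤ ∑ i ∈ B', θtil i ^ 2 :=
      Finset.card_nsmul_le_sum B' _ m (fun i hi => Finset.inf'_le _ hi)
    calc ∑ j ∈ C, θtil j ^ 2 ≤ C.card • m := h1
      _ = (C.card : ℝ) • m := by simp
      _ ≤ (B'.card : ℝ) • m := h2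
      _ = B'.card • m := by simp
      _ ≤ _ := h3
  have hB'Δt : ∑ i ∈ B', θtil i ^ 2 = ∑ i ∈ B', Δt i ^ 2 :=
    Finset.sum_congr rfl (fun i hi => by simp [hΔt, hB'θ i hi])
  have hB'Δh : ∑ i ∈ B', θtil i ^ 2 = ∑ i ∈ B', Δh i ^ 2 :=
    Finset.sum_congr rfl (fun i hi => by simp [hΔh, hθhat, hB'S hi, hB'θ i hi])
  constructor
  · -- left inequality : L ≤ 5 N, stated as (1/5) L ≤ N
    -- split S into two halves
    obtain ⟨S1, hS1sub, hS1card⟩ := Finset.exists_subset_card_eq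
      (show s ≤ S.card by omega)
    have hS2card : (S \ S1).card = s := by
      rw [Finset.card_sdiff_of_subset hS1sub]; omega
    have hsumS : ∑ i ∈ S, Δh i ^ 2 ≤ 2 * N ^ 2 := by
      have hsplit : ∑ i ∈ S \ S1, Δh i ^ 2 + ∑ i ∈ S1, Δh i ^ 2 = ∑ i ∈ S, Δh i ^ 2 :=
        Finset.sum_sdiff hS1sub
      have e1 : ∑ i ∈ S1, Δh i ^ 2 = ∑ i ∈ S1, Δt i ^ 2 :=
        Finset.sum_congr rfl (fun i hi => by rw [hΔhS i (hS1sub hi)])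
      have e2 : ∑ i ∈ S \ S1, Δh i ^ 2 = ∑ i ∈ S \ S1, Δt i ^ 2 :=
        Finset.sum_congr rfl (fun i hi => by rw [hΔhS i (Finset.sdiff_subset hi)])
      have b1 : ∑ i ∈ S1, Δt i ^ 2 ≤ N ^ 2 := sq_restrict_le s Δt S1 (le_of_eq hS1card)
      have b2 : ∑ i ∈ S \ S1, Δt i ^ 2 ≤ N ^ 2 := sq_restrict_le s Δt _ (le_of_eq hS2card)
      nlinarith
    have hsumSc : ∑ i ∈ Finset.univ \ S, Δh i ^ 2 ≤ 4 * N ^ 2 := by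
      have e0 : ∑ i ∈ Finset.univ \ S, Δh i ^ 2 = ∑ i ∈ T \ S, Δh i ^ 2 := by
        symm
        apply Finset.sum_subset
        · intro i hi
          rcases Finset.mem_sdiff.mp hi with ⟨h1, h2⟩
          exact Finset.mem_sdiff.mpr ⟨Finset.mem_univ _, h2⟩
        · intro i hi hni
          rcases Finset.mem_sdiff.mp hi with ⟨_, h2⟩
          have : i ∉ T := fun h => hni (Finset.mem_sdiff.mpr ⟨h, h2⟩)
          rw [hΔhSc i h2, hθ0 i this]
          ring
      have hTScard : (T \ S).card ≤ s := le_trans (Finset.card_le_card Finset.sdiff_subset) hsparse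
      have b1 : ∑ i ∈ T \ S, θtil i ^ 2 ≤ N ^ 2 := by
        calc ∑ i ∈ T \ S, θtil i ^ 2 ≤ ∑ i ∈ B', θtil i ^ 2 :=
              hkey _ (fun j hj => (Finset.mem_sdiff.mp hj).2) hTScard
          _ = ∑ i ∈ B', Δt i ^ 2 := hB'Δt
          _ ≤ N ^ 2 := sq_restrict_le s Δt B' (le_of_eq hB'card)
      have b2 : ∑ i ∈ T \ S, Δt i ^ 2 ≤ N ^ 2 := sq_restrict_le s Δt _ hTScard
      have b3 : ∑ i ∈ T \ S, Δh i ^ 2 ≤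
          ∑ i ∈ T \ S, (2 * θtil i ^ 2 + 2 * Δt i ^ 2) := by
        apply Finset.sum_le_sum
        intro i hi
        rw [hΔhSc i (Finset.mem_sdiff.mp hi).2]
        have : θ i = θtil i - Δt i := by simp [hΔt]
        rw [this]
        nlinarith [sq_nonneg (θtil i + Δt i)]
      rw [e0]
      rw [Finset.sum_add_distrib, ← Finset.mul_sum, ← Finset.mul_sum] at b3
      nlinarith
    have hLN : L ^ 2 ≤ 25 * N ^ 2 := by
      have hsplit : ∑ i ∈ Finset.univ \ S, Δh i ^ 2 + ∑ i ∈ S, Δh i ^ 2 = ∑ i, Δh i ^ 2 :=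
        Finset.sum_sdiff (Finset.subset_univ S)
      rw [hL2] at hsplit
      nlinarith
    nlinarith
  · -- right inequality : N ≤ 4 L
    apply Finset.sup'_le
    intro A hA
    rw [Finset.mem_filter] at hA
    have hAcard : A.card ≤ s := hA.2
    have hsq : ∑ i ∈ A, Δt i ^ 2 ≤ 16 * L ^ 2 := by
      have hsplit : ∑ i ∈ A \ (A ∩ S), Δt i ^ 2 + ∑ i ∈ A ∩ S, Δt i ^ 2
          = ∑ i ∈ A, Δt i ^ 2 := Finset.sum_sdiff (Finset.inter_subset_left)
      have hAS : A \ (A ∩ S) = A \ S := Finset.sdiff_inter_self_left A S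
      rw [hAS] at hsplit
      have b1 : ∑ i ∈ A ∩ S, Δt i ^ 2 ≤ L ^ 2 := by
        calc ∑ i ∈ A ∩ S, Δt i ^ 2 = ∑ i ∈ A ∩ S, Δh i ^ 2 :=
              Finset.sum_congr rfl (fun i hi => by
                rw [hΔhS i (Finset.mem_inter.mp hi).2])
          _ ≤ L ^ 2 := hsumL _
      have b2 : ∑ i ∈ A \ S, θtil i ^ 2 ≤ L ^ 2 := by
        calc ∑ i ∈ A \ S, θtil i ^ 2 ≤ ∑ i ∈ B', θtil i ^ 2 :=
              hkey _ (fun j hj => (Finset.mem_sdiff.mp hj).2)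
                (le_trans (Finset.card_le_card Finset.sdiff_subset) hAcard)
          _ = ∑ i ∈ B', Δh i ^ 2 := hB'Δh
          _ ≤ L ^ 2 := hsumL _
      have b3 : ∑ i ∈ A \ S, θ i ^ 2 ≤ L ^ 2 := by
        calc ∑ i ∈ A \ S, θ i ^ 2 = ∑ i ∈ A \ S, Δh i ^ 2 :=
              Finset.sum_congr rfl (fun i hi => by
                rw [hΔhSc i (Finset.mem_sdiff.mp hi).2]; ring)
          _ ≤ L ^ 2 := hsumL _
      have b4 : ∑ i ∈ A \ S, Δt i ^ 2 ≤
          ∑ i ∈ A \ S, (2 * θtil i ^ 2 + 2 * θ i ^ 2) := by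
        apply Finset.sum_le_sum
        intro i _
        have : Δt i = θtil i - θ i := by simp [hΔt]
        rw [this]
        nlinarith [sq_nonneg (θtil i + θ i)]
      rw [Finset.sum_add_distrib, ← Finset.mul_sum, ← Finset.mul_sum] at b4
      nlinarith
    show restrictNorm Δt A ≤ 4 * L
    rw [restrictNorm]
    have h16 : (16 : ℝ) * L ^ 2 = (4 * L) ^ 2 := by ring
    calc Real.sqrt (∑ i ∈ A, Δt i ^ 2) ≤ Real.sqrt ((4 * L) ^ 2) := by
          apply Real.sqrt_le_sqrt; rw [← h16]; exact hsq
      _ = 4 * L := Real.sqrt_sq (by positivity)
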